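/- Let k be a field and let I ⊆ k[x₀,x₁,x₂] be a strongly stable monomial ideal such that dim_k k[x₀,x₁,x₂]/I = 11, I contains no monomial of degree 1, I contains exactly one monomial of degree 2, and I is generated by its monomials of degree at most 5. Then I equals one of exactly two ideals: A = (x₀², x₀x₁², x₀x₁x₂, x₀x₂², x₁³, x₁²x₂, x₁x₂³, x₂⁴) or B = (x₀², x₀x₁², x₀x₁x₂, x₀x₂², x₁³, x₁²x₂, x₁x₂², x₂⁵). (These are the two possibilities, distinguished by whether the ideal is generated in degrees at most 4, for the generic initial ideal of a general hyperplane section of a degree-11 rational curve having exactly one quadratic generator.) -/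

import Mathlib

set_option maxHeartbeats 1000000
set_option linter.all false
set_option synthInstance.maxSize 2000
set_option synthInstance.maxHeartbeats 1000000

open MvPolynomial

/-- The total degree of an exponent vector. -/
def expDeg3 (d : Fin 3 →₀ ℕ) : ℕ := d.sum fun _ e => e

/-- `I ⊆ k[x₀,x₁,x₂]` is a monomial ideal: it is generated by (some set of) monomials. -/
def IsMonomialIdeal3 (k : Type*) [Field k] (I : Ideal (MvPolynomial (Fin 3) k)) : Prop :=
  ∃ S : Set (Fin 3 →₀ ℕ), I = Ideal.span ((fun d => monomial d (1 : k)) '' S)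

/-- `I` is strongly stable (Borel-fixed): for every monomial `m ∈ I` and indices `i < j`
with `x_j ∣ m`, we have `x_i · m / x_j ∈ I`. -/
def IsStronglyStable3 (k : Type*) [Field k] (I : Ideal (MvPolynomial (Fin 3) k)) : Prop :=
  ∀ d : Fin 3 →₀ ℕ, monomial d (1 : k) ∈ I →
    ∀ i j : Fin 3, i < j → d j ≠ 0 →
      monomial (d - Finsupp.single j 1 + Finsupp.single i 1) (1 : k) ∈ I

noncomputable def sng (a b c : ℕ) : Fin 3 →₀ ℕ :=
  Finsupp.single 0 a + Finsupp.single 1 b + Finsupp.single 2 c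

lemma sng_apply0 (a b c : ℕ) : sng a b c 0 = a := by simp [sng, Finsupp.single_apply]
lemma sng_apply1 (a b c : ℕ) : sng a b c 1 = b := by simp [sng, Finsupp.single_apply]
lemma sng_apply2 (a b c : ℕ) : sng a b c 2 = c := by simp [sng, Finsupp.single_apply]

lemma sng_repr (d : Fin 3 →₀ ℕ) : sng (d 0) (d 1) (d 2) = d := by
  ext i
  fin_cases i <;> simp [sng_apply0, sng_apply1, sng_apply2]

lemma expDeg3_apply (d : Fin 3 →₀ ℕ) : expDeg3 d = d 0 + d 1 + d 2 := by
  rw [expDeg3, Finsupp.sum_fintype _ _ (fun _ => rfl)]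
  simp [Fin.sum_univ_three]

lemma expDeg3_sng (a b c : ℕ) : expDeg3 (sng a b c) = a + b + c := by
  rw [expDeg3_apply, sng_apply0, sng_apply1, sng_apply2]

lemma sng_le_iff (a b c : ℕ) (d : Fin 3 →₀ ℕ) :
    sng a b c ≤ d ↔ a ≤ d 0 ∧ b ≤ d 1 ∧ c ≤ d 2 := by
  constructor
  · intro h; rw [Finsupp.le_def] at h
    exact ⟨by simpa [sng_apply0] using h 0, by simpa [sng_apply1] using h 1,
      by simpa [sng_apply2] using h 2⟩
  · rw [Finsupp.le_def]; rintro ⟨h0, h1, h2⟩ i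
    fin_cases i <;> simp [sng_apply0, sng_apply1, sng_apply2, *]

lemma sng_borel1 (a b c : ℕ) :
    sng a (b+1) c - Finsupp.single 1 1 + Finsupp.single 0 1 = sng (a+1) b c := by
  ext i; fin_cases i <;>
    simp [sng, Finsupp.single_apply, Finsupp.tsub_apply]

lemma sng_borel2 (a b c : ℕ) :
    sng a b (c+1) - Finsupp.single 2 1 + Finsupp.single 1 1 = sng a (b+1) c := by
  ext i; fin_cases i <;>
    simp [sng, Finsupp.single_apply, Finsupp.tsub_apply]


lemma sng_monomial {k : Type*} [Field k] (a b c : ℕ) :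
    monomial (sng a b c) (1:k) = X 0 ^ a * X 1 ^ b * X 2 ^ c := by
  simp [sng, X_pow_eq_monomial, monomial_mul]

lemma quotient_card (k : Type*) [Field k] (I : Ideal (MvPolynomial (Fin 3) k))
    (M : Set (Fin 3 →₀ ℕ))
    (hmem : ∀ p : MvPolynomial (Fin 3) k, p ∈ I ↔ ∀ d ∈ p.support, d ∈ M)
    (hcolen : Module.finrank k (MvPolynomial (Fin 3) k ⧸ I) = 11) :
    Mᶜ.Finite ∧ Mᶜ.ncard = 11 := by
  classical
  set C : Set (Fin 3 →₀ ℕ) := Mᶜ with hC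
  have hmonomial_mem : ∀ d : Fin 3 →₀ ℕ, monomial d (1:k) ∈ I ↔ d ∈ M := by
    intro d
    rw [hmem]
    rw [support_monomial]
    simp [one_ne_zero]
  set mkl : MvPolynomial (Fin 3) k →ₗ[k] (MvPolynomial (Fin 3) k ⧸ I) :=
    (Ideal.Quotient.mkₐ k I).toLinearMap with hmkl
  set fam : C → MvPolynomial (Fin 3) k := fun c => monomial c.1 (1:k) with hfam
  set g : (C →₀ k) →ₗ[k] (MvPolynomial (Fin 3) k ⧸ I) :=
    Finsupp.linearCombination k (fun c => mkl (fam c)) with hg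
  have hgv : ∀ v, g v = mkl (Finsupp.linearCombination k fam v) := by
    intro v
    rw [hg, Finsupp.apply_linearCombination]
    rfl
  have hcoeff : ∀ (v : C →₀ k) (d : Fin 3 →₀ ℕ),
      coeff d (Finsupp.linearCombination k fam v)
        = if h : d ∈ C then v ⟨d, h⟩ else 0 := by
    intro v d
    rw [Finsupp.linearCombination_apply, Finsupp.sum, coeff_sum]
    simp only [hfam, coeff_smul, coeff_monomial, smul_eq_mul]
    split_ifs with h
    · rw [Finset.sum_eq_single (⟨d, h⟩ : C)]
      · simp
      · intro c _ hne
        have : ¬ (c.1 = d) := fun he => hne (Subtype.ext he)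
        simp [this]
      · intro hns
        simp [Finsupp.notMem_support_iff.mp hns]
    · apply Finset.sum_eq_zero
      intro c _
      have : ¬ (c.1 = d) := fun he => h (he ▸ c.2)
      simp [this]
  have hinj : Function.Injective g := by
    rw [← LinearMap.ker_eq_bot, LinearMap.ker_eq_bot']
    intro v hv
    rw [hgv] at hv
    have hvI : Finsupp.linearCombination k fam v ∈ I := by
      rw [← Ideal.Quotient.eq_zero_iff_mem]
      exact hv
    rw [hmem] at hvI
    ext c
    rw [Finsupp.coe_zero, Pi.zero_apply]
    by_contra hne
    have hd : c.1 ∈ (Finsupp.linearCombination k fam v).support := by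
      rw [MvPolynomial.mem_support_iff, hcoeff]
      simpa [c.2] using hne
    exact c.2 (hvI _ hd)
  have hsurj : Function.Surjective g := by
    intro q
    obtain ⟨p, rfl⟩ := Ideal.Quotient.mk_surjective q
    have : ∀ p : MvPolynomial (Fin 3) k, ∃ v, g v = Ideal.Quotient.mk I p := by
      intro p
      induction p using MvPolynomial.induction_on' with
      | monomial d a =>
        by_cases hd : d ∈ M
        · refine ⟨0, ?_⟩
          rw [map_zero]
          symm
          rw [Ideal.Quotient.eq_zero_iff_mem]
          have : monomial d a = a • monomial d (1:k) := by
            rw [smul_monomial, smul_eq_mul, mul_one]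
          rw [this]
          exact Submodule.smul_of_tower_mem I a ((hmonomial_mem d).2 hd)
        · refine ⟨Finsupp.single ⟨d, hd⟩ a, ?_⟩
          rw [hg, Finsupp.linearCombination_single,
            show a • mkl (fam ⟨d, hd⟩) = mkl (a • fam ⟨d, hd⟩) from (map_smul mkl a _).symm,
            show a • fam ⟨d, hd⟩ = monomial d a from by
              rw [hfam]; rw [smul_monomial, smul_eq_mul, mul_one]]
          rfl
      | add p q hp hq =>
        obtain ⟨v, hv⟩ := hp
        obtain ⟨w, hw⟩ := hq
        refine ⟨v + w, ?_⟩
        rw [map_add, hv, hw, RingHom.map_add]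
    exact this p
  have e := LinearEquiv.ofBijective g ⟨hinj, hsurj⟩
  have h11 : Nat.card C = 11 := by
    have he := e.finrank_eq
    rw [hcolen] at he
    have h2 : Module.finrank k (↥C →₀ k) = Nat.card ↥C := by
      rw [Module.finrank, rank_finsupp_self, Cardinal.toNat_lift, Nat.card]
    rw [← h2, he]
  have hfinC : Finite ↥C := Nat.finite_of_card_ne_zero (by rw [h11]; norm_num)
  exact ⟨Set.finite_coe_iff.mp hfinC, by rw [← Nat.card_coe_set_eq, h11]⟩

def C10f : Finset (ℕ×ℕ×ℕ) :=
  {(0,0,0),(1,0,0),(0,1,0),(0,0,1),(1,1,0),(1,0,1),(0,2,0),(0,1,1),(0,0,2),(0,0,3)}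

lemma memC10 (a b c : ℕ) : ((a,b,c) ∈ C10f) ↔
    (a=0∧b=0∧c=0) ∨ (a=1∧b=0∧c=0) ∨ (a=0∧b=1∧c=0) ∨ (a=0∧b=0∧c=1) ∨
    (a=1∧b=1∧c=0) ∨ (a=1∧b=0∧c=1) ∨ (a=0∧b=2∧c=0) ∨ (a=0∧b=1∧c=1) ∨
    (a=0∧b=0∧c=2) ∨ (a=0∧b=0∧c=3) := by
  simp [C10f, Prod.ext_iff]

lemma cardC10 : C10f.card = 10 := by decide

lemma charA_aux : ∀ (a : Fin 2) (b : Fin 3) (c : Fin 4),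
    ((a.1=0∧b.1=1∧c.1=2) ∨ (a.1=0∧b.1=0∧c.1=0) ∨ (a.1=1∧b.1=0∧c.1=0) ∨ (a.1=0∧b.1=1∧c.1=0) ∨
     (a.1=0∧b.1=0∧c.1=1) ∨ (a.1=1∧b.1=1∧c.1=0) ∨ (a.1=1∧b.1=0∧c.1=1) ∨ (a.1=0∧b.1=2∧c.1=0) ∨
     (a.1=0∧b.1=1∧c.1=1) ∨ (a.1=0∧b.1=0∧c.1=2) ∨ (a.1=0∧b.1=0∧c.1=3)) ∨
    (2≤a.1 ∨ (1≤a.1∧2≤b.1) ∨ (1≤a.1∧1≤b.1∧1≤c.1) ∨ (1≤a.1∧2≤c.1) ∨ 3≤b.1 ∨ (2≤b.1∧1≤c.1) ∨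
      (1≤b.1∧3≤c.1) ∨ 4≤c.1) := by decide

lemma charB_aux : ∀ (a : Fin 2) (b : Fin 3) (c : Fin 5),
    ((a.1=0∧b.1=0∧c.1=4) ∨ (a.1=0∧b.1=0∧c.1=0) ∨ (a.1=1∧b.1=0∧c.1=0) ∨ (a.1=0∧b.1=1∧c.1=0) ∨
     (a.1=0∧b.1=0∧c.1=1) ∨ (a.1=1∧b.1=1∧c.1=0) ∨ (a.1=1∧b.1=0∧c.1=1) ∨ (a.1=0∧b.1=2∧c.1=0) ∨
     (a.1=0∧b.1=1∧c.1=1) ∨ (a.1=0∧b.1=0∧c.1=2) ∨ (a.1=0∧b.1=0∧c.1=3)) ∨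
    (2≤a.1 ∨ (1≤a.1∧2≤b.1) ∨ (1≤a.1∧1≤b.1∧1≤c.1) ∨ (1≤a.1∧2≤c.1) ∨ 3≤b.1 ∨ (2≤b.1∧1≤c.1) ∨
      (1≤b.1∧2≤c.1) ∨ 5≤c.1) := by decide

lemma charA (a b c : ℕ) : ((a,b,c) ∉ insert ((0:ℕ),(1:ℕ),(2:ℕ)) (C10f : Set (ℕ×ℕ×ℕ))) ↔
    (2≤a) ∨ (1≤a∧2≤b) ∨ (1≤a∧1≤b∧1≤c) ∨ (1≤a∧2≤c) ∨ (3≤b) ∨ (2≤b∧1≤c) ∨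
    (1≤b∧3≤c) ∨ (4≤c) := by
  rw [Set.mem_insert_iff, Finset.mem_coe, memC10, Prod.ext_iff, Prod.ext_iff]
  simp only [not_or]
  constructor
  · intro h
    obtain ⟨h0,h1,h2,h3,h4,h5,h6,h7,h8,h9,h10⟩ := h
    rcases Nat.lt_or_ge a 2 with ha | ha
    · rcases Nat.lt_or_ge b 3 with hb | hb
      · rcases Nat.lt_or_ge c 4 with hc | hc
        · rcases charA_aux ⟨a, ha⟩ ⟨b, hb⟩ ⟨c, hc⟩ with (m|m|m|m|m|m|m|m|m|m|m) | rhs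
          · exact absurd m h0
          · exact absurd m h1
          · exact absurd m h2
          · exact absurd m h3
          · exact absurd m h4
          · exact absurd m h5
          · exact absurd m h6
          · exact absurd m h7
          · exact absurd m h8
          · exact absurd m h9
          · exact absurd m h10
          · exact rhs
        · exact Or.inr (Or.inr (Or.inr (Or.inr (Or.inr (Or.inr (Or.inr hc))))))
      · exact Or.inr (Or.inr (Or.inr (Or.inr (Or.inl hb))))
    · exact Or.inl ha
  · intro h
    refine ⟨?_,?_,?_,?_,?_,?_,?_,?_,?_,?_,?_⟩ <;> rintro ⟨rfl, rfl, rfl⟩ <;> omega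

lemma charB (a b c : ℕ) : ((a,b,c) ∉ insert ((0:ℕ),(0:ℕ),(4:ℕ)) (C10f : Set (ℕ×ℕ×ℕ))) ↔
    (2≤a) ∨ (1≤a∧2≤b) ∨ (1≤a∧1≤b∧1≤c) ∨ (1≤a∧2≤c) ∨ (3≤b) ∨ (2≤b∧1≤c) ∨
    (1≤b∧2≤c) ∨ (5≤c) := by
  rw [Set.mem_insert_iff, Finset.mem_coe, memC10, Prod.ext_iff, Prod.ext_iff]
  simp only [not_or]
  constructor
  · intro h
    obtain ⟨h0,h1,h2,h3,h4,h5,h6,h7,h8,h9,h10⟩ := h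
    rcases Nat.lt_or_ge a 2 with ha | ha
    · rcases Nat.lt_or_ge b 3 with hb | hb
      · rcases Nat.lt_or_ge c 5 with hc | hc
        · rcases charB_aux ⟨a, ha⟩ ⟨b, hb⟩ ⟨c, hc⟩ with (m|m|m|m|m|m|m|m|m|m|m) | rhs
          · exact absurd m h0
          · exact absurd m h1
          · exact absurd m h2
          · exact absurd m h3
          · exact absurd m h4
          · exact absurd m h5
          · exact absurd m h6
          · exact absurd m h7
          · exact absurd m h8
          · exact absurd m h9
          · exact absurd m h10
          · exact rhs
        · exact Or.inr (Or.inr (Or.inr (Or.inr (Or.inr (Or.inr (Or.inr hc))))))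
      · exact Or.inr (Or.inr (Or.inr (Or.inr (Or.inl hb))))
    · exact Or.inl ha
  · intro h
    refine ⟨?_,?_,?_,?_,?_,?_,?_,?_,?_,?_,?_⟩ <;> rintro ⟨rfl, rfl, rfl⟩ <;> omega
lemma core (Q : ℕ → ℕ → ℕ → Prop)
    (mono : ∀ a b c a' b' c', a ≤ a' → b ≤ b' → c ≤ c' → Q a b c → Q a' b' c')
    (b1 : ∀ a b c, Q a (b+1) c → Q (a+1) b c)
    (b2 : ∀ a b c, Q a b (c+1) → Q a (b+1) c)
    (h1 : ¬ Q 1 0 0 ∧ ¬ Q 0 1 0 ∧ ¬ Q 0 0 1)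
    (h2 : ∃ a b c, a+b+c = 2 ∧ Q a b c)
    (h2u : ∀ a b c a' b' c', a+b+c=2 → Q a b c → a'+b'+c'=2 → Q a' b' c' →
      (a,b,c) = ((a',b',c') : ℕ×ℕ×ℕ))
    (hfin : {t : ℕ×ℕ×ℕ | ¬ Q t.1 t.2.1 t.2.2}.Finite)
    (hcard : {t : ℕ×ℕ×ℕ | ¬ Q t.1 t.2.1 t.2.2}.ncard = 11) :
    {t : ℕ×ℕ×ℕ | ¬ Q t.1 t.2.1 t.2.2} = insert (0,1,2) (C10f : Set (ℕ×ℕ×ℕ)) ∨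
    {t : ℕ×ℕ×ℕ | ¬ Q t.1 t.2.1 t.2.2} = insert (0,0,4) (C10f : Set (ℕ×ℕ×ℕ)) := by
  classical
  set N := {t : ℕ×ℕ×ℕ | ¬ Q t.1 t.2.1 t.2.2} with hN
  have memN : ∀ a b c : ℕ, ((a,b,c) ∈ N) ↔ ¬ Q a b c := fun _ _ _ => Iff.rfl
  have nb1 : ∀ a b c, ¬ Q (a+1) b c → ¬ Q a (b+1) c := fun a b c h hq => h (b1 _ _ _ hq)
  have nb2 : ∀ a b c, ¬ Q a (b+1) c → ¬ Q a b (c+1) := fun a b c h hq => h (b2 _ _ _ hq)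
  have L1 : ∀ a b c, ¬ Q a b c → ¬ Q 0 (a+b) c := by
    intro a
    induction a with
    | zero => intro b c h; simpa using h
    | succ n ih =>
      intro b c h
      have h2 := ih (b+1) c (nb1 n b c h)
      rwa [show n + (b+1) = (n+1) + b from by omega] at h2
  have L2 : ∀ b c, ¬ Q 0 b c → ¬ Q 0 0 (b+c) := by
    intro b
    induction b with
    | zero => intro c h; simpa using h
    | succ n ih =>
      intro c h
      have h2 := ih (c+1) (nb2 0 n c h)
      rwa [show n + (c+1) = (n+1) + c from by omega] at h2
  have R1 : ∀ c a b, Q a b c → Q a (b+c) 0 := by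
    intro c
    induction c with
    | zero => intro a b h; simpa using h
    | succ n ih =>
      intro a b h
      have h2 := ih a (b+1) (b2 a b n h)
      rwa [show (b+1) + n = b + (n+1) from by omega] at h2
  have R2 : ∀ b a, Q a b 0 → Q (a+b) 0 0 := by
    intro b
    induction b with
    | zero => intro a h; simpa using h
    | succ n ih =>
      intro a h
      have h2 := ih (a+1) (b1 a n 0 h)
      rwa [show (a+1) + n = a + (n+1) from by omega] at h2
  have q2 : Q 2 0 0 := by
    obtain ⟨a, b, c, hd, hq⟩ := h2
    have := R2 (b+c) a (R1 c a b hq)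
    rwa [show a + (b+c) = 2 from by omega] at this
  have nqd2 : ∀ a b c, a+b+c = 2 → ¬(a = 2 ∧ b = 0 ∧ c = 0) → ¬ Q a b c := by
    intro a b c hd hne hq
    have := h2u a b c 2 0 0 hd hq (by omega) q2
    simp [Prod.ext_iff] at this
    omega
  have nq000 : ¬ Q 0 0 0 := fun h => h1.1 (mono 0 0 0 1 0 0 (by omega) le_rfl le_rfl h)
  have nq003 : ¬ Q 0 0 3 := by
    intro h
    have q012 : Q 0 1 2 := b2 _ _ _ h
    have q021 : Q 0 2 1 := b2 _ _ _ q012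
    have q030 : Q 0 3 0 := b2 _ _ _ q021
    have q102 : Q 1 0 2 := b1 _ _ _ q012
    have q111 : Q 1 1 1 := b1 _ _ _ q021
    have q120 : Q 1 2 0 := b1 _ _ _ q030
    have q201 : Q 2 0 1 := b1 _ _ _ q111
    have q210 : Q 2 1 0 := b1 _ _ _ q120
    have q300 : Q 3 0 0 := b1 _ _ _ q210
    have key : ∀ a b c : ℕ, a+b+c = 3 → Q a b c := by
      intro a b c hd
      have ha : a ≤ 3 := by omega
      have hb : b ≤ 3 := by omega
      have hc : c ≤ 3 := by omega
      interval_cases a <;> interval_cases b <;> interval_cases c <;>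
        first
          | omega
          | exact h | exact q012 | exact q021 | exact q030 | exact q102
          | exact q111 | exact q120 | exact q201 | exact q210 | exact q300
    have hall : ∀ a b c : ℕ, 3 ≤ a+b+c → Q a b c := by
      intro a b c hd
      refine mono (min a 3) (min b (3 - min a 3)) (3 - min a 3 - min b (3 - min a 3)) a b c
        (by omega) (by omega) (by omega) (key _ _ _ (by omega))
    have hsub : N ⊆ ↑({(0,0,0),(1,0,0),(0,1,0),(0,0,1),(2,0,0),(1,1,0),(1,0,1),(0,2,0),
        (0,1,1),(0,0,2)} : Finset (ℕ×ℕ×ℕ)) := by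
      rintro ⟨a, b, c⟩ ht
      rw [memN] at ht
      have hd : a + b + c ≤ 2 := by
        by_contra hd
        exact ht (hall a b c (by omega))
      simp only [Finset.coe_insert, Set.mem_insert_iff, Finset.coe_singleton,
        Set.mem_singleton_iff, Prod.ext_iff]
      omega
    have hle := Set.ncard_le_ncard hsub (Finset.finite_toSet _)
    rw [Set.ncard_coe_finset, hcard] at hle
    have : ({(0,0,0),(1,0,0),(0,1,0),(0,0,1),(2,0,0),(1,1,0),(1,0,1),(0,2,0),
        (0,1,1),(0,0,2)} : Finset (ℕ×ℕ×ℕ)).card = 10 := by decide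
    omega
  have hC10N : (C10f : Set (ℕ×ℕ×ℕ)) ⊆ N := by
    rintro ⟨a, b, c⟩ ht
    rw [Finset.mem_coe, memC10] at ht
    rw [memN]
    rcases ht with h|h|h|h|h|h|h|h|h|h <;> obtain ⟨rfl, rfl, rfl⟩ := h
    · exact nq000
    · exact h1.1
    · exact h1.2.1
    · exact h1.2.2
    · exact nqd2 1 1 0 (by omega) (by omega)
    · exact nqd2 1 0 1 (by omega) (by omega)
    · exact nqd2 0 2 0 (by omega) (by omega)
    · exact nqd2 0 1 1 (by omega) (by omega)
    · exact nqd2 0 0 2 (by omega) (by omega)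
    · exact nq003
  -- there is exactly one extra element z
  have hCcard : (C10f : Set (ℕ×ℕ×ℕ)).ncard = 10 := by
    rw [Set.ncard_coe_finset, cardC10]
  have hssub : (C10f : Set (ℕ×ℕ×ℕ)) ⊂ N := by
    refine ⟨hC10N, fun h => ?_⟩
    have := Set.ncard_le_ncard h (Finset.finite_toSet _)
    omega
  obtain ⟨z, hzN, hzC⟩ := Set.exists_of_ssubset hssub
  have hNz : N = insert z (C10f : Set (ℕ×ℕ×ℕ)) := by
    refine (Set.eq_of_subset_of_ncard_le ?_ ?_ hfin).symm
    · rw [Set.insert_subset_iff]; exact ⟨hzN, hC10N⟩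
    · rw [Set.ncard_insert_of_notMem hzC (Finset.finite_toSet _), hCcard, hcard]
  obtain ⟨za, zb, zc⟩ := z
  rw [Finset.mem_coe, memC10] at hzC
  rw [memN] at hzN
  have hmemz : ∀ a b c : ℕ, ¬ Q a b c → ((a,b,c) = ((za,zb,zc) : ℕ×ℕ×ℕ) ∨ (a,b,c) ∈ C10f) := by
    intro a b c h
    have : (a,b,c) ∈ N := h
    rw [hNz] at this
    simpa using this
  have hdegz : 3 ≤ za + zb + zc := by
    by_contra hd
    have h200 : (za, zb, zc) = ((2,0,0) : ℕ×ℕ×ℕ) := by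
      simp only [Prod.ext_iff]
      omega
    rw [show za = 2 from by omega, show zb = 0 from by omega, show zc = 0 from by omega] at hzN
    exact hzN q2
  -- corner elements
  have hcorner : ¬ Q 0 0 (za + zb + zc) :=
    L2 (za + zb) zc (L1 za zb zc hzN)
  have hdegz4 : za + zb + zc ≤ 4 := by
    by_contra hd
    have h4 : ¬ Q 0 0 4 := fun h => hcorner (mono 0 0 4 0 0 _ le_rfl le_rfl (by omega) h)
    rcases hmemz 0 0 4 h4 with h | h
    · simp only [Prod.ext_iff] at h; omega
    · rw [memC10] at h; omega
  -- push z down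
  have hza : za = 0 := by
    have h1' := L1 za zb zc hzN
    rcases hmemz 0 (za+zb) zc h1' with h | h
    · simp only [Prod.ext_iff] at h; omega
    · rw [memC10] at h; omega
  subst hza
  rcases (by omega : zb + zc = 3 ∨ zb + zc = 4) with hd3 | hd4
  · -- degree 3 case : z = (0,1,2)
    have hzb : 1 ≤ zb := by omega
    have hzN' : ¬ Q 0 ((zb-1)+1) zc := by
      rwa [show (zb-1)+1 = zb from by omega]
    have hw2 := nb2 0 (zb-1) zc hzN'
    have hz12 : zb = 1 ∧ zc = 2 := by
      rcases hmemz 0 (zb-1) (zc+1) hw2 with h | h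
      · simp only [Prod.ext_iff] at h; omega
      · rw [memC10] at h; omega
    left
    rw [hNz, hz12.1, hz12.2]
  · -- degree 4 case : z = (0,0,4)
    have hw2 := L2 zb zc hzN
    have hz04 : zb = 0 ∧ zc = 4 := by
      rcases hmemz 0 0 (zb+zc) hw2 with h | h
      · simp only [Prod.ext_iff] at h; omega
      · rw [memC10] at h; omega
    right
    rw [hNz, hz04.1, hz04.2]

/-- A strongly stable monomial ideal in `k[x₀,x₁,x₂]` of colength 11 with no monomial of
degree 1, exactly one monomial of degree 2, generated by its monomials of degree at most 5,
equals `(x₀², x₀x₁², x₀x₁x₂, x₀x₂², x₁³, x₁²x₂, x₁x₂³, x₂⁴)` or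
`(x₀², x₀x₁², x₀x₁x₂, x₀x₂², x₁³, x₁²x₂, x₁x₂², x₂⁵)`. -/
theorem gins_with_one_quadratic_generator
    (k : Type*) [Field k] (I : Ideal (MvPolynomial (Fin 3) k))
    (hmon : IsMonomialIdeal3 k I) (hss : IsStronglyStable3 k I)
    (hcolen : Module.finrank k (MvPolynomial (Fin 3) k ⧸ I) = 11)
    (hdeg1 : ∀ d : Fin 3 →₀ ℕ, expDeg3 d = 1 → monomial d (1 : k) ∉ I)
    (hdeg2 : ∃! d : Fin 3 →₀ ℕ, expDeg3 d = 2 ∧ monomial d (1 : k) ∈ I)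
    (hgen : I = Ideal.span ((fun d => monomial d (1 : k)) ''
      {d : Fin 3 →₀ ℕ | expDeg3 d ≤ 5 ∧ monomial d (1 : k) ∈ I})) :
    I = Ideal.span {X 0 ^ 2, X 0 * X 1 ^ 2, X 0 * X 1 * X 2, X 0 * X 2 ^ 2,
        X 1 ^ 3, X 1 ^ 2 * X 2, X 1 * X 2 ^ 3, (X 2 : MvPolynomial (Fin 3) k) ^ 4} ∨
    I = Ideal.span {X 0 ^ 2, X 0 * X 1 ^ 2, X 0 * X 1 * X 2, X 0 * X 2 ^ 2,
        X 1 ^ 3, X 1 ^ 2 * X 2, X 1 * X 2 ^ 2, (X 2 : MvPolynomial (Fin 3) k) ^ 5} := by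
  classical
  obtain ⟨S, hS⟩ := hmon
  set M : Set (Fin 3 →₀ ℕ) := {d | ∃ s ∈ S, s ≤ d} with hM
  have hmemI : ∀ p : MvPolynomial (Fin 3) k, p ∈ I ↔ ∀ d ∈ p.support, d ∈ M := by
    intro p; rw [hS]; exact mem_ideal_span_monomial_image
  have hmm : ∀ d : Fin 3 →₀ ℕ, monomial d (1:k) ∈ I ↔ d ∈ M := by
    intro d; rw [hmemI, support_monomial]; simp [one_ne_zero]
  have hMup : ∀ d e : Fin 3 →₀ ℕ, d ∈ M → d ≤ e → e ∈ M := by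
    rintro d e ⟨s, hsS, hsd⟩ hde; exact ⟨s, hsS, hsd.trans hde⟩
  set Q : ℕ → ℕ → ℕ → Prop := fun a b c => sng a b c ∈ M with hQ
  have mono : ∀ a b c a' b' c', a ≤ a' → b ≤ b' → c ≤ c' → Q a b c → Q a' b' c' := by
    intro a b c a' b' c' ha hb hc h
    refine hMup _ _ h ?_
    rw [sng_le_iff, sng_apply0, sng_apply1, sng_apply2]
    exact ⟨ha, hb, hc⟩
  have b1 : ∀ a b c, Q a (b+1) c → Q (a+1) b c := by
    intro a b c h
    have := hss (sng a (b+1) c) ((hmm _).2 h) 0 1 (by decide)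
      (by rw [sng_apply1]; omega)
    rw [sng_borel1] at this
    exact (hmm _).1 this
  have b2 : ∀ a b c, Q a b (c+1) → Q a (b+1) c := by
    intro a b c h
    have := hss (sng a b (c+1)) ((hmm _).2 h) 1 2 (by decide)
      (by rw [sng_apply2]; omega)
    rw [sng_borel2] at this
    exact (hmm _).1 this
  have h1 : ¬ Q 1 0 0 ∧ ¬ Q 0 1 0 ∧ ¬ Q 0 0 1 := by
    refine ⟨fun h => ?_, fun h => ?_, fun h => ?_⟩ <;>
      [exact hdeg1 _ (by rw [expDeg3_sng]) ((hmm _).2 h);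
       exact hdeg1 _ (by rw [expDeg3_sng]) ((hmm _).2 h);
       exact hdeg1 _ (by rw [expDeg3_sng]) ((hmm _).2 h)]
  have h2 : ∃ a b c, a+b+c = 2 ∧ Q a b c := by
    obtain ⟨d, ⟨hdeg, hdI⟩, -⟩ := hdeg2
    refine ⟨d 0, d 1, d 2, ?_, ?_⟩
    · rw [expDeg3_apply] at hdeg; omega
    · show sng (d 0) (d 1) (d 2) ∈ M
      rw [sng_repr]
      exact (hmm d).1 hdI
  have h2u : ∀ a b c a' b' c', a+b+c=2 → Q a b c → a'+b'+c'=2 → Q a' b' c' →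
      (a,b,c) = ((a',b',c') : ℕ×ℕ×ℕ) := by
    intro a b c a' b' c' hd hq hd' hq'
    obtain ⟨d₀, _, hun⟩ := hdeg2
    have e1 := hun (sng a b c) ⟨by rw [expDeg3_sng]; omega, (hmm _).2 hq⟩
    have e2 := hun (sng a' b' c') ⟨by rw [expDeg3_sng]; omega, (hmm _).2 hq'⟩
    have he : sng a b c = sng a' b' c' := e1.trans e2.symm
    have g0 : sng a b c 0 = sng a' b' c' 0 := by rw [he]
    have g1 : sng a b c 1 = sng a' b' c' 1 := by rw [he]
    have g2 : sng a b c 2 = sng a' b' c' 2 := by rw [he]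
    rw [sng_apply0, sng_apply0] at g0
    rw [sng_apply1, sng_apply1] at g1
    rw [sng_apply2, sng_apply2] at g2
    simp [Prod.ext_iff, g0, g1, g2]
  obtain ⟨hCfin, hCcard⟩ := quotient_card k I M hmemI hcolen
  set T : Set (ℕ×ℕ×ℕ) := {t : ℕ×ℕ×ℕ | ¬ Q t.1 t.2.1 t.2.2} with hT
  have hTeq : T = (fun d : Fin 3 →₀ ℕ => (d 0, d 1, d 2)) '' Mᶜ := by
    ext ⟨a, b, c⟩
    constructor
    · intro h
      refine ⟨sng a b c, h, ?_⟩
      show ((sng a b c) 0, (sng a b c) 1, (sng a b c) 2) = (a, b, c)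
      rw [sng_apply0, sng_apply1, sng_apply2]
    · rintro ⟨d, hd, heq⟩
      obtain ⟨h0, h1, h2⟩ : d 0 = a ∧ d 1 = b ∧ d 2 = c := by
        simpa [Prod.ext_iff] using heq
      show ¬ sng a b c ∈ M
      rw [show sng a b c = d from by rw [← h0, ← h1, ← h2, sng_repr]]
      exact hd
  have hinjOn : Set.InjOn (fun d : Fin 3 →₀ ℕ => (d 0, d 1, d 2)) Mᶜ := by
    intro d _ e _ h
    obtain ⟨h0, h1, h2⟩ : d 0 = e 0 ∧ d 1 = e 1 ∧ d 2 = e 2 := by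
      simpa [Prod.ext_iff] using h
    rw [← sng_repr d, h0, h1, h2, sng_repr]
  have hTfin : T.Finite := by rw [hTeq]; exact hCfin.image _
  have hTcard : T.ncard = 11 := by rw [hTeq, Set.ncard_image_of_injOn hinjOn, hCcard]
  have hMchar : ∀ (z : ℕ×ℕ×ℕ), T = insert z (C10f : Set (ℕ×ℕ×ℕ)) →
      ∀ d : Fin 3 →₀ ℕ, (d ∈ M ↔ ((d 0, d 1, d 2) : ℕ×ℕ×ℕ) ∉ insert z (C10f : Set (ℕ×ℕ×ℕ))) := by
    intro z hz d
    have hd : Q (d 0) (d 1) (d 2) ↔ d ∈ M := by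
      show sng (d 0) (d 1) (d 2) ∈ M ↔ d ∈ M
      rw [sng_repr]
    rw [← hd]
    have hmemT : (¬ Q (d 0) (d 1) (d 2)) ↔
        ((d 0, d 1, d 2) : ℕ×ℕ×ℕ) ∈ insert z (C10f : Set (ℕ×ℕ×ℕ)) := by
      rw [← hz]; exact Iff.rfl
    exact (not_not.symm).trans (not_congr hmemT)
  rcases core Q mono b1 b2 h1 h2 h2u hTfin hTcard with hA | hB
  · left
    have hMA : ∀ d : Fin 3 →₀ ℕ, d ∈ M ↔ ∃ g ∈ ({sng 2 0 0, sng 1 2 0, sng 1 1 1, sng 1 0 2,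
        sng 0 3 0, sng 0 2 1, sng 0 1 3, sng 0 0 4} : Set (Fin 3 →₀ ℕ)), g ≤ d := by
      intro d
      rw [hMchar _ hA d, charA]
      constructor
      · rintro (h|h|h|h|h|h|h|h)
        · exact ⟨sng 2 0 0, by simp, by rw [sng_le_iff]; exact ⟨h, Nat.zero_le _, Nat.zero_le _⟩⟩
        · exact ⟨sng 1 2 0, by simp, by rw [sng_le_iff]; exact ⟨h.1, h.2, Nat.zero_le _⟩⟩
        · exact ⟨sng 1 1 1, by simp, by rw [sng_le_iff]; exact ⟨h.1, h.2.1, h.2.2⟩⟩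
        · exact ⟨sng 1 0 2, by simp, by rw [sng_le_iff]; exact ⟨h.1, Nat.zero_le _, h.2⟩⟩
        · exact ⟨sng 0 3 0, by simp, by rw [sng_le_iff]; exact ⟨Nat.zero_le _, h, Nat.zero_le _⟩⟩
        · exact ⟨sng 0 2 1, by simp, by rw [sng_le_iff]; exact ⟨Nat.zero_le _, h.1, h.2⟩⟩
        · exact ⟨sng 0 1 3, by simp, by rw [sng_le_iff]; exact ⟨Nat.zero_le _, h.1, h.2⟩⟩
        · exact ⟨sng 0 0 4, by simp, by rw [sng_le_iff]; exact ⟨Nat.zero_le _, Nat.zero_le _, h⟩⟩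
      · rintro ⟨g, hg, hle⟩
        simp only [Set.mem_insert_iff, Set.mem_singleton_iff] at hg
        rcases hg with rfl|rfl|rfl|rfl|rfl|rfl|rfl|rfl <;> rw [sng_le_iff] at hle <;> omega
    have himg : ((fun d => monomial d (1:k)) '' {sng 2 0 0, sng 1 2 0, sng 1 1 1, sng 1 0 2,
        sng 0 3 0, sng 0 2 1, sng 0 1 3, sng 0 0 4}) =
        {X 0 ^ 2, X 0 * X 1 ^ 2, X 0 * X 1 * X 2, X 0 * X 2 ^ 2,
          X 1 ^ 3, X 1 ^ 2 * X 2, X 1 * X 2 ^ 3, (X 2 : MvPolynomial (Fin 3) k) ^ 4} := by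
      simp only [Set.image_insert_eq, Set.image_singleton, sng_monomial, pow_zero, pow_one,
        mul_one, one_mul]
    rw [← himg]
    refine Submodule.ext fun p => ?_
    rw [hmemI p, mem_ideal_span_monomial_image]
    exact forall₂_congr fun d _ => hMA d
  · right
    have hMB : ∀ d : Fin 3 →₀ ℕ, d ∈ M ↔ ∃ g ∈ ({sng 2 0 0, sng 1 2 0, sng 1 1 1, sng 1 0 2,
        sng 0 3 0, sng 0 2 1, sng 0 1 2, sng 0 0 5} : Set (Fin 3 →₀ ℕ)), g ≤ d := by
      intro d
      rw [hMchar _ hB d, charB]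
      constructor
      · rintro (h|h|h|h|h|h|h|h)
        · exact ⟨sng 2 0 0, by simp, by rw [sng_le_iff]; exact ⟨h, Nat.zero_le _, Nat.zero_le _⟩⟩
        · exact ⟨sng 1 2 0, by simp, by rw [sng_le_iff]; exact ⟨h.1, h.2, Nat.zero_le _⟩⟩
        · exact ⟨sng 1 1 1, by simp, by rw [sng_le_iff]; exact ⟨h.1, h.2.1, h.2.2⟩⟩
        · exact ⟨sng 1 0 2, by simp, by rw [sng_le_iff]; exact ⟨h.1, Nat.zero_le _, h.2⟩⟩
        · exact ⟨sng 0 3 0, by simp, by rw [sng_le_iff]; exact ⟨Nat.zero_le _, h, Nat.zero_le _⟩⟩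
        · exact ⟨sng 0 2 1, by simp, by rw [sng_le_iff]; exact ⟨Nat.zero_le _, h.1, h.2⟩⟩
        · exact ⟨sng 0 1 2, by simp, by rw [sng_le_iff]; exact ⟨Nat.zero_le _, h.1, h.2⟩⟩
        · exact ⟨sng 0 0 5, by simp, by rw [sng_le_iff]; exact ⟨Nat.zero_le _, Nat.zero_le _, h⟩⟩
      · rintro ⟨g, hg, hle⟩
        simp only [Set.mem_insert_iff, Set.mem_singleton_iff] at hg
        rcases hg with rfl|rfl|rfl|rfl|rfl|rfl|rfl|rfl <;> rw [sng_le_iff] at hle <;> omega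
    have himg : ((fun d => monomial d (1:k)) '' {sng 2 0 0, sng 1 2 0, sng 1 1 1, sng 1 0 2,
        sng 0 3 0, sng 0 2 1, sng 0 1 2, sng 0 0 5}) =
        {X 0 ^ 2, X 0 * X 1 ^ 2, X 0 * X 1 * X 2, X 0 * X 2 ^ 2,
          X 1 ^ 3, X 1 ^ 2 * X 2, X 1 * X 2 ^ 2, (X 2 : MvPolynomial (Fin 3) k) ^ 5} := by
      simp only [Set.image_insert_eq, Set.image_singleton, sng_monomial, pow_zero, pow_one,
        mul_one, one_mul]
    rw [← himg]
    refine Submodule.ext fun p => ?_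
    rw [hmemI p, mem_ideal_span_monomial_image]
    exact forall₂_congr fun d _ => hMB d
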